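/- Let H = X⊗I₂⊗X + I₂⊗X⊗X, let ρ₀ = ½|011⟩⟨011| + ½|100⟩⟨100|, and let ρ_τ = exp(−(iπ/4)H) ρ₀ exp((iπ/4)H). Define the two-qubit vectors χ± = ½(|00⟩ + |11⟩ ± |01⟩ ∓ |10⟩) and the single-qubit vectors |y±⟩ = (|0⟩ ± i|1⟩)/√2. Then ρ_τ = ½ |χ₊⟩⟨χ₊| ⊗ |y₊⟩⟨y₊| + ½ |χ₋⟩⟨χ₋| ⊗ |y₋⟩⟨y₋|. In particular, ρ_τ is classically correlated as measured on C (zero discord D_{AB|C} at time τ = π/4): the von Neumann measurement on C in the orthonormal basis {|y₊⟩, |y₋⟩} leaves ρ_τ unchanged. -/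

import Mathlib

/-!
STATEMENT 3: With `H = X⊗I₂⊗X + I₂⊗X⊗X`, `ρ₀ = ½|011⟩⟨011| + ½|100⟩⟨100|` and
`ρ_τ = exp(−(iπ/4)H) ρ₀ exp((iπ/4)H)`, one has
`ρ_τ = ½|χ₊⟩⟨χ₊|⊗|y₊⟩⟨y₊| + ½|χ₋⟩⟨χ₋|⊗|y₋⟩⟨y₋|`, and the von Neumann measurement
on C in the orthonormal basis `{|y₊⟩, |y₋⟩}` leaves `ρ_τ` unchanged (zero discord
`D_{AB|C}` at `τ = π/4`).
-/

open Matrix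
open scoped Kronecker

noncomputable section

/-- The Pauli-x matrix. -/
def X : Matrix (Fin 2) (Fin 2) ℂ := !![0, 1; 1, 0]

/-- The 2×2 identity matrix. -/
def Id2 : Matrix (Fin 2) (Fin 2) ℂ := 1

/-- `H = X⊗I₂⊗X + I₂⊗X⊗X` (tensor factors ordered A, B, C). -/
def HH : Matrix (Fin 2 × Fin 2 × Fin 2) (Fin 2 × Fin 2 × Fin 2) ℂ :=
  X ⊗ₖ (Id2 ⊗ₖ X) + Id2 ⊗ₖ (X ⊗ₖ X)

/-- Standard basis vector `|0⟩` of ℂ². -/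
def ket0 : Fin 2 → ℂ := ![1, 0]

/-- Standard basis vector `|1⟩` of ℂ². -/
def ket1 : Fin 2 → ℂ := ![0, 1]

/-- `|ab⟩ = |a⟩⊗|b⟩ ∈ ℂ⁴` (Kronecker product of vectors). -/
def kron2 (u v : Fin 2 → ℂ) : Fin 2 × Fin 2 → ℂ := fun p => u p.1 * v p.2

/-- `|abc⟩ = |a⟩⊗|b⟩⊗|c⟩ ∈ ℂ⁸` (Kronecker product of vectors). -/
def kron3 (u v w : Fin 2 → ℂ) : Fin 2 × Fin 2 × Fin 2 → ℂ :=
  fun p => u p.1 * v p.2.1 * w p.2.2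

/-- The outer product (projector) `|v⟩⟨v|`. -/
def outer {n : Type*} (v : n → ℂ) : Matrix n n ℂ := vecMulVec v (star v)

/-- Tensor product of a two-qubit (AB) vector with a one-qubit (C) vector. -/
def joinABC (w : Fin 2 × Fin 2 → ℂ) (v : Fin 2 → ℂ) : Fin 2 × Fin 2 × Fin 2 → ℂ :=
  fun p => w (p.1, p.2.1) * v p.2.2

/-- `χ₊ = ½(|00⟩ + |11⟩ + |01⟩ − |10⟩)`. -/
def chiPlus : Fin 2 × Fin 2 → ℂ :=
  (1 / 2 : ℂ) • (kron2 ket0 ket0 + kron2 ket1 ket1 + kron2 ket0 ket1 - kron2 ket1 ket0)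

/-- `χ₋ = ½(|00⟩ + |11⟩ − |01⟩ + |10⟩)`. -/
def chiMinus : Fin 2 × Fin 2 → ℂ :=
  (1 / 2 : ℂ) • (kron2 ket0 ket0 + kron2 ket1 ket1 - kron2 ket0 ket1 + kron2 ket1 ket0)

/-- `|y₊⟩ = (|0⟩ + i|1⟩)/√2`. -/
def yPlus : Fin 2 → ℂ := ((Real.sqrt 2 : ℂ))⁻¹ • (ket0 + Complex.I • ket1)

/-- `|y₋⟩ = (|0⟩ − i|1⟩)/√2`. -/
def yMinus : Fin 2 → ℂ := ((Real.sqrt 2 : ℂ))⁻¹ • (ket0 - Complex.I • ket1)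

/-- `ρ₀ = ½|011⟩⟨011| + ½|100⟩⟨100|`. -/
def rho0 : Matrix (Fin 2 × Fin 2 × Fin 2) (Fin 2 × Fin 2 × Fin 2) ℂ :=
  (1 / 2 : ℂ) • outer (kron3 ket0 ket1 ket1) + (1 / 2 : ℂ) • outer (kron3 ket1 ket0 ket0)

/-- `ρ_τ = exp(−(iπ/4)H) ρ₀ exp((iπ/4)H)`. -/
def rhoTau : Matrix (Fin 2 × Fin 2 × Fin 2) (Fin 2 × Fin 2 × Fin 2) ℂ :=
  NormedSpace.exp ((-(Complex.I * ((Real.pi : ℂ) / 4))) • HH) * rho0 *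
    NormedSpace.exp ((Complex.I * ((Real.pi : ℂ) / 4)) • HH)

/-- `I₄ ⊗ P`: the operator acting as `P` on subsystem C and trivially on A, B. -/
def embedC (P : Matrix (Fin 2) (Fin 2) ℂ) :
    Matrix (Fin 2 × Fin 2 × Fin 2) (Fin 2 × Fin 2 × Fin 2) ℂ :=
  Id2 ⊗ₖ (Id2 ⊗ₖ P)

/-- The state after a von Neumann measurement `{P, I₂ − P}` on subsystem C:
`(I₄⊗P)ρ(I₄⊗P) + (I₄⊗(I₂−P))ρ(I₄⊗(I₂−P))`. -/
def measC (P : Matrix (Fin 2) (Fin 2) ℂ)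
    (ρ : Matrix (Fin 2 × Fin 2 × Fin 2) (Fin 2 × Fin 2 × Fin 2) ℂ) :
    Matrix (Fin 2 × Fin 2 × Fin 2) (Fin 2 × Fin 2 × Fin 2) ℂ :=
  embedC P * ρ * embedC P + embedC (Id2 - P) * ρ * embedC (Id2 - P)

/-!
The two terms `X⊗I₂⊗X` and `I₂⊗X⊗X` of `H` commute and square to the identity, so for each of
them `exp(−iθS) = cos θ − i sin θ S`; at `θ = π/4` the propagator is
`U = ½(1 − i X⊗I₂⊗X)(1 − i I₂⊗X⊗X)`, and `ρ_τ = ½|a⟩⟨a| + ½|b⟩⟨b|` with `a = U|011⟩`,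
`b = U|100⟩`. Since `χ₊⊗y₊ = (ia − b)/√2` and `χ₋⊗y₋ = (ia + b)/√2`, the parallelogram law for
`v ↦ |v⟩⟨v|` turns one mixture into the other. As `y₊ ⊥ y₋`, the projector `|y₊⟩⟨y₊|` fixes the
first branch and kills the second, and `I₂ − |y₊⟩⟨y₊|` does the opposite, so the measurement
leaves `ρ_τ` unchanged.
-/

open Complex

theorem ofReal_sqrt_two_inv_mul_self : ((√2 : ℝ) : ℂ)⁻¹ * ((√2 : ℝ) : ℂ)⁻¹ = 1 / 2 := by
  rw [← mul_inv, ← ofReal_mul, Real.mul_self_sqrt zero_le_two]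
  norm_num

section Involution

variable {A : Type*} [Ring A] [Algebra ℂ A] [TopologicalSpace A] [IsTopologicalRing A]
  [ContinuousSMul ℂ A] [T2Space A] {S : A}

theorem exp_smul_of_mul_self_eq_one (hS : S * S = 1) (z : ℂ) :
    NormedSpace.exp (z • S) = cosh z • 1 + sinh z • S := by
  have hpow (k : ℕ) : S ^ (2 * k) = 1 := by rw [pow_mul, sq, hS, one_pow]
  rw [NormedSpace.exp_eq_tsum ℂ]
  refine HasSum.tsum_eq (HasSum.even_add_odd ?_ ?_)
  · convert (hasSum_cosh z).smul_const (1 : A) using 2 with k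
    rw [smul_pow, hpow, smul_smul, div_eq_inv_mul]
  · convert (hasSum_sinh z).smul_const S using 2 with k
    rw [smul_pow, pow_succ S, hpow, one_mul, smul_smul, div_eq_inv_mul]

theorem exp_neg_I_pi_div_four_smul (hS : S * S = 1) :
    NormedSpace.exp ((-(I * ((Real.pi : ℂ) / 4))) • S) = ((√2 : ℝ) : ℂ)⁻¹ • (1 - I • S) := by
  have hcos : cos ((Real.pi : ℂ) / 4) = ((√2 : ℝ) : ℂ)⁻¹ := by
    rw [← ofReal_inv, ← one_div, ← Real.sqrt_div_self', ← Real.cos_pi_div_four, ofReal_cos]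
    push_cast
    rfl
  have hsin : sin ((Real.pi : ℂ) / 4) = ((√2 : ℝ) : ℂ)⁻¹ := by
    rw [← ofReal_inv, ← one_div, ← Real.sqrt_div_self', ← Real.sin_pi_div_four, ofReal_sin]
    push_cast
    rfl
  rw [exp_smul_of_mul_self_eq_one hS, cosh_neg, sinh_neg, mul_comm, cosh_mul_I, sinh_mul_I, hcos,
    hsin, smul_sub, neg_smul, mul_smul]
  abel

end Involution

section outer

variable {n : Type*}

theorem conjTranspose_outer (v : n → ℂ) : (outer v)ᴴ = outer v := by
  rw [outer, conjTranspose_vecMulVec, star_star]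

theorem outer_smul (c : ℂ) (v : n → ℂ) : outer (c • v) = (c * star c) • outer v := by
  rw [outer, outer, star_smul, smul_vecMulVec, vecMulVec_smul, smul_smul]

theorem outer_add_add_outer_sub (u v : n → ℂ) :
    outer (u + v) + outer (u - v) = (2 : ℂ) • (outer u + outer v) := by
  simp only [outer, star_add, star_sub, add_vecMulVec, vecMulVec_add, sub_vecMulVec,
    vecMulVec_sub]
  module

variable [Fintype n]

theorem mul_outer_mul_conjTranspose (M : Matrix n n ℂ) (v : n → ℂ) :
    M * outer v * Mᴴ = outer (M *ᵥ v) := by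
  rw [outer, outer, mul_vecMulVec, vecMulVec_mul, vecMul_conjTranspose, star_star]

theorem outer_mulVec (v u : n → ℂ) : outer v *ᵥ u = (star v ⬝ᵥ u) • v := by
  rw [outer, vecMulVec_mulVec, op_smul_eq_smul]

end outer

theorem X_mul_X : X * X = 1 := by
  ext i j
  fin_cases i <;> fin_cases j <;> simp [X]

theorem conjTranspose_HH : HHᴴ = HH := by
  have hX : Xᴴ = X := by
    ext i j
    fin_cases i <;> fin_cases j <;> simp [X]
  simp [HH, Id2, conjTranspose_kronecker, hX]

theorem X_mulVec_ket0 : X *ᵥ ket0 = ket1 := by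
  ext i
  fin_cases i <;> simp [X, ket0, ket1]

theorem X_mulVec_ket1 : X *ᵥ ket1 = ket0 := by
  ext i
  fin_cases i <;> simp [X, ket0, ket1]

theorem XIX_mul_XIX : X ⊗ₖ (Id2 ⊗ₖ X) * X ⊗ₖ (Id2 ⊗ₖ X) = 1 := by
  simp [← mul_kronecker_mul, X_mul_X, Id2]

theorem IXX_mul_IXX : Id2 ⊗ₖ (X ⊗ₖ X) * Id2 ⊗ₖ (X ⊗ₖ X) = 1 := by
  simp [← mul_kronecker_mul, X_mul_X, Id2]

theorem commute_XIX_IXX : Commute (X ⊗ₖ (Id2 ⊗ₖ X)) (Id2 ⊗ₖ (X ⊗ₖ X)) := by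
  simp [Commute, SemiconjBy, ← mul_kronecker_mul, Id2]

theorem kronecker_kronecker_mulVec_kron3 (A B C : Matrix (Fin 2) (Fin 2) ℂ)
    (u v w : Fin 2 → ℂ) :
    A ⊗ₖ (B ⊗ₖ C) *ᵥ kron3 u v w = kron3 (A *ᵥ u) (B *ᵥ v) (C *ᵥ w) := by
  ext ⟨i, j, k⟩
  simp only [mulVec, dotProduct, Fintype.sum_prod_type, Fin.sum_univ_two, kroneckerMap_apply,
    kron3]
  ring

def propagator : Matrix (Fin 2 × Fin 2 × Fin 2) (Fin 2 × Fin 2 × Fin 2) ℂ :=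
  NormedSpace.exp ((-(I * ((Real.pi : ℂ) / 4))) • HH)

theorem propagator_eq :
    propagator =
      (1 / 2 : ℂ) • ((1 - I • X ⊗ₖ (Id2 ⊗ₖ X)) * (1 - I • Id2 ⊗ₖ (X ⊗ₖ X))) := by
  rw [propagator, HH, smul_add,
    Matrix.exp_add_of_commute _ _ (commute_XIX_IXX.smul_left _ |>.smul_right _),
    exp_neg_I_pi_div_four_smul XIX_mul_XIX, exp_neg_I_pi_div_four_smul IXX_mul_IXX,
    smul_mul_smul_comm, ofReal_sqrt_two_inv_mul_self]

theorem propagator_mulVec_kron3 (u v w : Fin 2 → ℂ) :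
    propagator *ᵥ kron3 u v w =
      (1 / 2 : ℂ) • (kron3 u v w - I • kron3 (X *ᵥ u) v (X *ᵥ w)
        - I • kron3 u (X *ᵥ v) (X *ᵥ w) - kron3 (X *ᵥ u) (X *ᵥ v) w) := by
  rw [propagator_eq, smul_mulVec, ← mulVec_mulVec]
  simp only [sub_mulVec, one_mulVec, smul_mulVec, mulVec_sub, mulVec_smul,
    kronecker_kronecker_mulVec_kron3, Id2, mulVec_mulVec, X_mul_X, smul_sub, smul_smul, I_mul_I,
    one_mul]
  module

theorem rhoTau_eq_propagator_conj : rhoTau = propagator * rho0 * propagatorᴴ := by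
  rw [rhoTau, propagator, ← Matrix.exp_conjTranspose, conjTranspose_smul, conjTranspose_HH]
  congr
  simp

theorem joinABC_chiPlus_yPlus :
    joinABC chiPlus yPlus = ((√2 : ℝ) : ℂ)⁻¹ •
      (I • (propagator *ᵥ kron3 ket0 ket1 ket1) - propagator *ᵥ kron3 ket1 ket0 ket0) := by
  rw [propagator_mulVec_kron3, propagator_mulVec_kron3, X_mulVec_ket0, X_mulVec_ket1]
  ext ⟨i, j, k⟩
  fin_cases i <;> fin_cases j <;> fin_cases k <;>
    simp [Complex.ext_iff, joinABC, chiPlus, yPlus, kron2, kron3, ket0, ket1, mul_comm]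

theorem joinABC_chiMinus_yMinus :
    joinABC chiMinus yMinus = ((√2 : ℝ) : ℂ)⁻¹ •
      (I • (propagator *ᵥ kron3 ket0 ket1 ket1) + propagator *ᵥ kron3 ket1 ket0 ket0) := by
  rw [propagator_mulVec_kron3, propagator_mulVec_kron3, X_mulVec_ket0, X_mulVec_ket1]
  ext ⟨i, j, k⟩
  fin_cases i <;> fin_cases j <;> fin_cases k <;>
    simp [Complex.ext_iff, joinABC, chiMinus, yMinus, kron2, kron3, ket0, ket1, mul_comm]

theorem rhoTau_eq_mixture :
    rhoTau = (1 / 2 : ℂ) • outer (joinABC chiPlus yPlus) +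
      (1 / 2 : ℂ) • outer (joinABC chiMinus yMinus) := by
  set a := propagator *ᵥ kron3 ket0 ket1 ket1
  set b := propagator *ᵥ kron3 ket1 ket0 ket0
  have hrho : rhoTau = (1 / 2 : ℂ) • outer a + (1 / 2 : ℂ) • outer b := by
    rw [rhoTau_eq_propagator_conj, rho0, mul_add, add_mul, mul_smul_comm, smul_mul_assoc,
      mul_smul_comm, smul_mul_assoc, mul_outer_mul_conjTranspose, mul_outer_mul_conjTranspose]
  have hnorm : ((√2 : ℝ) : ℂ)⁻¹ * star ((√2 : ℝ) : ℂ)⁻¹ = 1 / 2 := by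
    rw [star_inv₀, star_def, conj_ofReal, ofReal_sqrt_two_inv_mul_self]
  have hIa : outer (I • a) = outer a := by
    rw [outer_smul, star_def, conj_I, mul_neg, I_mul_I, neg_neg, one_smul]
  have hpar := outer_add_add_outer_sub (I • a) b
  rw [hIa] at hpar
  rw [hrho, joinABC_chiPlus_yPlus, joinABC_chiMinus_yMinus, outer_smul, outer_smul, hnorm]
  linear_combination (norm := module) (-(1 / 4 : ℂ)) • hpar

theorem conjTranspose_embedC (P : Matrix (Fin 2) (Fin 2) ℂ) : (embedC P)ᴴ = embedC Pᴴ := by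
  simp [embedC, Id2, conjTranspose_kronecker]

theorem embedC_mulVec_joinABC (P : Matrix (Fin 2) (Fin 2) ℂ) (w : Fin 2 × Fin 2 → ℂ)
    (v : Fin 2 → ℂ) : embedC P *ᵥ joinABC w v = joinABC w (P *ᵥ v) := by
  ext ⟨i, j, k⟩
  simp only [mulVec, dotProduct, embedC, Id2, kroneckerMap_apply, one_apply, ite_mul, one_mul,
    zero_mul, mul_ite, mul_zero, joinABC, Fintype.sum_prod_type, Finset.sum_ite_irrel,
    Fin.sum_univ_two, Finset.sum_const_zero, Finset.sum_ite_eq, Finset.mem_univ, ↓reduceIte]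
  ring

theorem measC_add (P : Matrix (Fin 2) (Fin 2) ℂ)
    (ρ σ : Matrix (Fin 2 × Fin 2 × Fin 2) (Fin 2 × Fin 2 × Fin 2) ℂ) :
    measC P (ρ + σ) = measC P ρ + measC P σ := by
  simp only [measC, mul_add, add_mul]
  abel

theorem measC_smul (P : Matrix (Fin 2) (Fin 2) ℂ) (c : ℂ)
    (ρ : Matrix (Fin 2 × Fin 2 × Fin 2) (Fin 2 × Fin 2 × Fin 2) ℂ) :
    measC P (c • ρ) = c • measC P ρ := by
  simp only [measC, mul_smul_comm, smul_mul_assoc, smul_add]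

theorem measC_outer_joinABC {P : Matrix (Fin 2) (Fin 2) ℂ} (hP : Pᴴ = P)
    (w : Fin 2 × Fin 2 → ℂ) (v : Fin 2 → ℂ) :
    measC P (outer (joinABC w v)) =
      outer (joinABC w (P *ᵥ v)) + outer (joinABC w ((Id2 - P) *ᵥ v)) := by
  have hQ : (Id2 - P)ᴴ = Id2 - P := by rw [conjTranspose_sub, hP, Id2, conjTranspose_one]
  have hE {Q : Matrix (Fin 2) (Fin 2) ℂ} (hQ : Qᴴ = Q) : (embedC Q)ᴴ = embedC Q := by
    rw [conjTranspose_embedC, hQ]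
  rw [← embedC_mulVec_joinABC, ← embedC_mulVec_joinABC, ← mul_outer_mul_conjTranspose,
    ← mul_outer_mul_conjTranspose, hE hP, hE hQ, measC]

theorem joinABC_zero (w : Fin 2 × Fin 2 → ℂ) : joinABC w 0 = 0 := by
  ext p
  simp [joinABC]

theorem measC_outer_mixture {e f : Fin 2 → ℂ} (he : star e ⬝ᵥ e = 1) (hef : star e ⬝ᵥ f = 0)
    (w w' : Fin 2 × Fin 2 → ℂ) (p q : ℂ) :
    measC (outer e) (p • outer (joinABC w e) + q • outer (joinABC w' f)) =
      p • outer (joinABC w e) + q • outer (joinABC w' f) := by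
  have hQ (v : Fin 2 → ℂ) : (Id2 - outer e) *ᵥ v = v - outer e *ᵥ v := by
    rw [sub_mulVec, Id2, one_mulVec]
  rw [measC_add, measC_smul, measC_smul, measC_outer_joinABC (conjTranspose_outer e),
    measC_outer_joinABC (conjTranspose_outer e), hQ, hQ, outer_mulVec, outer_mulVec, he, hef,
    one_smul, zero_smul, sub_self, sub_zero]
  simp [joinABC_zero, outer]

theorem star_yPlus_dotProduct_yPlus : star yPlus ⬝ᵥ yPlus = 1 := by
  rw [yPlus, star_smul, smul_dotProduct, dotProduct_smul]
  simp [ket0, ket1, dotProduct, Fin.sum_univ_two, ← mul_assoc, ofReal_sqrt_two_inv_mul_self,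
    one_add_one_eq_two]

theorem star_yPlus_dotProduct_yMinus : star yPlus ⬝ᵥ yMinus = 0 := by
  rw [yPlus, yMinus, star_smul, smul_dotProduct, dotProduct_smul]
  simp [ket0, ket1, dotProduct, Fin.sum_univ_two]

theorem rhoTau_is_classical_on_C :
    rhoTau =
      (1 / 2 : ℂ) • outer (joinABC chiPlus yPlus) +
        (1 / 2 : ℂ) • outer (joinABC chiMinus yMinus) ∧
    measC (outer yPlus) rhoTau = rhoTau := by
  refine ⟨rhoTau_eq_mixture, ?_⟩
  rw [rhoTau_eq_mixture]
  exact measC_outer_mixture star_yPlus_dotProduct_yPlus star_yPlus_dotProduct_yMinus _ _ _ _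

end
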